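/- For β > 0 and V(s) = e^{−βs/8} ₀F₁(2/β; s/4), let W(s) = (1/24) e^{−βs/8} ∑_{p≥0} (p/(p!(2/β)_p)) (−2+9p−10p²+3p³)(s/4)^p; then W(s) − (s²/(2β²)) V''(s) equals (s/48) e^{−βs/8} ( (−1+1/β) ₀F₁(2/β; s/4) + ((1−1/β) + sβ/8) ₀F₁(2/β+1; s/4) ). -/

import Mathlib

/-- The rising Pochhammer symbol `(x)_p`. -/
noncomputable def poch (x : ℝ) (p : ℕ) : ℝ := ∏ i ∈ Finset.range p, (x + i)

/-- The hypergeometric function `₀F₁(c; z) = ∑_{p≥0} z^p/(p! (c)_p)`. -/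
noncomputable def hyp0F1 (c z : ℝ) : ℝ := ∑' p : ℕ, z ^ p / ((Nat.factorial p) * poch c p)

/-- `V(s) = e^{−βs/8} ₀F₁(2/β; s/4)`. -/
noncomputable def Vfun (β s : ℝ) : ℝ := Real.exp (-β * s / 8) * hyp0F1 (2 / β) (s / 4)

/-- `W(s) = (1/24) e^{−βs/8} ∑_{p≥0} (p/(p!(2/β)_p)) (−2+9p−10p²+3p³)(s/4)^p`. -/
noncomputable def Wfun (β s : ℝ) : ℝ :=
  (1 / 24) * Real.exp (-β * s / 8) *
    ∑' p : ℕ, (p : ℝ) / ((Nat.factorial p) * poch (2 / β) p) *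
      (-2 + 9 * (p : ℝ) - 10 * (p : ℝ) ^ 2 + 3 * (p : ℝ) ^ 3) * (s / 4) ^ p

/-! ### Auxiliary lemmas -/

lemma poch_zero (c : ℝ) : poch c 0 = 1 := by simp [poch]

lemma poch_succ (c : ℝ) (p : ℕ) : poch c (p + 1) = poch c p * (c + p) := by
  simp [poch, Finset.prod_range_succ]

lemma poch_succ' (c : ℝ) (p : ℕ) : poch c (p + 1) = c * poch (c + 1) p := by
  have h : ∀ x ∈ Finset.range p, c + ((x + 1 : ℕ) : ℝ) = c + 1 + (x : ℝ) := by
    intro x _; push_cast; ring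
  rw [poch, Finset.prod_range_succ', Finset.prod_congr rfl h]
  rw [poch]
  push_cast
  ring

lemma poch_pos {c : ℝ} (hc : 0 < c) (p : ℕ) : 0 < poch c p := by
  induction p with
  | zero => simp [poch]
  | succ n ih =>
      rw [poch_succ]
      have : (0:ℝ) < c + n := by positivity
      exact mul_pos ih this

lemma one_le_poch {c : ℝ} (hc : 1 ≤ c) (p : ℕ) : 1 ≤ poch c p := by
  induction p with
  | zero => simp [poch]
  | succ n ih =>
      rw [poch_succ]
      have h1 : (0:ℝ) ≤ n := Nat.cast_nonneg n
      nlinarith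

lemma min_le_poch {c : ℝ} (hc : 0 < c) (p : ℕ) : min c 1 ≤ poch c p := by
  cases p with
  | zero => simp [poch]
  | succ n =>
      rw [poch_succ']
      have h1 : 1 ≤ poch (c + 1) n := one_le_poch (by linarith) n
      calc min c 1 ≤ c := min_le_left _ _
        _ = c * 1 := (mul_one c).symm
        _ ≤ c * poch (c + 1) n := by nlinarith

lemma poch_add (c : ℝ) (k q : ℕ) : poch c (q + k) = poch c k * poch (c + k) q := by
  induction q with
  | zero => simp [poch]
  | succ n ih =>
      have h : n + 1 + k = (n + k) + 1 := by omega
      rw [h, poch_succ, ih, poch_succ]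
      push_cast
      ring

lemma summable_master {c : ℝ} (hc : 0 < c) (k : ℕ) (r : ℝ) :
    Summable (fun p : ℕ => (p : ℝ) ^ k * |r| ^ p / (p.factorial * poch c p)) := by
  have hm : 0 < min c 1 := lt_min hc one_pos
  have hsum : Summable (fun p : ℕ => ((2:ℝ) ^ k * |r|) ^ p / (p.factorial * min c 1)) := by
    simpa [div_div] using
      (Real.summable_pow_div_factorial ((2:ℝ) ^ k * |r|)).div_const (min c 1)
  refine Summable.of_nonneg_of_le (fun p => ?_) (fun p => ?_) hsum
  · have := (poch_pos hc p).le
    positivity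
  · have hfac : (0:ℝ) < p.factorial := by exact_mod_cast p.factorial_pos
    have hpk : (p : ℝ) ^ k ≤ ((2:ℝ) ^ k) ^ p := by
      have h1 : (p : ℝ) ≤ 2 ^ p := by exact_mod_cast (Nat.lt_two_pow_self (n := p)).le
      calc (p:ℝ) ^ k ≤ ((2:ℝ) ^ p) ^ k := pow_le_pow_left₀ (Nat.cast_nonneg p) h1 k
        _ = ((2:ℝ) ^ k) ^ p := by rw [← pow_mul, ← pow_mul, Nat.mul_comm]
    calc (p : ℝ) ^ k * |r| ^ p / (p.factorial * poch c p)
        ≤ ((2:ℝ) ^ k) ^ p * |r| ^ p / (p.factorial * min c 1) := by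
          apply div_le_div₀ (by positivity)
            (mul_le_mul_of_nonneg_right hpk (pow_nonneg (abs_nonneg r) p))
            (by positivity)
            (mul_le_mul_of_nonneg_left (min_le_poch hc p) hfac.le)
      _ = ((2:ℝ) ^ k * |r|) ^ p / (p.factorial * min c 1) := by rw [mul_pow]

lemma summable_of_le_master {c : ℝ} (hc : 0 < c) (k : ℕ) (r : ℝ) {f : ℕ → ℝ}
    (hf : ∀ p, |f p| ≤ (p : ℝ) ^ k * |r| ^ p / (p.factorial * poch c p)) : Summable f := by
  apply Summable.of_norm
  refine Summable.of_nonneg_of_le (fun p => norm_nonneg _) (fun p => ?_) (summable_master hc k r)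
  simpa [Real.norm_eq_abs] using hf p

lemma fac_poch_pos {c : ℝ} (hc : 0 < c) (p : ℕ) : (0:ℝ) < p.factorial * poch c p :=
  mul_pos (by exact_mod_cast p.factorial_pos) (poch_pos hc p)

lemma summable_hyp {c : ℝ} (hc : 0 < c) (z : ℝ) :
    Summable (fun p : ℕ => z ^ p / (p.factorial * poch c p)) := by
  apply summable_of_le_master hc 0 z
  intro p
  rw [pow_zero, one_mul, abs_div, abs_pow, abs_of_pos (fac_poch_pos hc p)]

lemma hyp0F1_hasDerivAt {c : ℝ} (hc : 0 < c) (z : ℝ) :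
    HasDerivAt (hyp0F1 c) (1 / c * hyp0F1 (c + 1) z) z := by
  set R : ℝ := |z| + 1 with hR
  have hR0 : 0 ≤ R := by rw [hR]; positivity
  have hR1 : (1:ℝ) ≤ R := by rw [hR]; exact le_add_of_nonneg_left (abs_nonneg z)
  have hzR : |z| < R := by rw [hR]; exact lt_add_one _
  have habsR : |R| = R := abs_of_nonneg hR0
  have hu : Summable (fun p : ℕ => (p:ℝ) * R ^ p / (p.factorial * poch c p)) := by
    apply summable_of_le_master hc 1 R
    intro p
    rw [pow_one, abs_div, abs_mul, abs_pow, abs_of_pos (fac_poch_pos hc p), Nat.abs_cast, habsR]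
  have hg : ∀ (p : ℕ) (y : ℝ), y ∈ Metric.ball (0:ℝ) R →
      HasDerivAt (fun x : ℝ => x ^ p / (p.factorial * poch c p))
        ((p : ℝ) * y ^ (p - 1) / (p.factorial * poch c p)) y :=
    fun p y _ => (hasDerivAt_pow p y).div_const _
  have hg' : ∀ (p : ℕ) (y : ℝ), y ∈ Metric.ball (0:ℝ) R →
      ‖(p : ℝ) * y ^ (p - 1) / (p.factorial * poch c p)‖
        ≤ (p:ℝ) * R ^ p / (p.factorial * poch c p) := by
    intro p y hy
    have hyR : |y| ≤ R := by
      have := Metric.mem_ball.mp hy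
      rw [Real.dist_eq, sub_zero] at this
      exact this.le
    have hD := fac_poch_pos hc p
    rw [Real.norm_eq_abs, abs_div, abs_mul, abs_pow, abs_of_pos hD, Nat.abs_cast]
    refine div_le_div₀ (by positivity) ?_ hD le_rfl
    refine mul_le_mul_of_nonneg_left ?_ (Nat.cast_nonneg p)
    calc |y| ^ (p - 1) ≤ R ^ (p - 1) := pow_le_pow_left₀ (abs_nonneg y) hyR _
      _ ≤ R ^ p := pow_le_pow_right₀ hR1 (Nat.sub_le p 1)
  have hmem : z ∈ Metric.ball (0:ℝ) R := by
    rw [Metric.mem_ball, Real.dist_eq, sub_zero]; exact hzR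
  have key : HasDerivAt (fun y => ∑' p : ℕ, y ^ p / (p.factorial * poch c p))
      (∑' p : ℕ, (p : ℝ) * z ^ (p - 1) / (p.factorial * poch c p)) z := by
    exact hasDerivAt_tsum_of_isPreconnected hu Metric.isOpen_ball
      (Convex.isPreconnected (convex_ball (0:ℝ) R)) hg hg' hmem (summable_hyp hc z) hmem
  have hsum_eq : (∑' p : ℕ, (p : ℝ) * z ^ (p - 1) / (p.factorial * poch c p))
      = 1 / c * hyp0F1 (c + 1) z := by
    have hs : Summable (fun p : ℕ => (p : ℝ) * z ^ (p - 1) / (p.factorial * poch c p)) := by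
      apply summable_of_le_master hc 1 R
      intro p
      rw [pow_one, abs_div, abs_mul, abs_pow, abs_of_pos (fac_poch_pos hc p), Nat.abs_cast, habsR]
      refine div_le_div₀ (by positivity) ?_ (fac_poch_pos hc p) le_rfl
      refine mul_le_mul_of_nonneg_left ?_ (Nat.cast_nonneg p)
      calc |z| ^ (p - 1) ≤ R ^ (p - 1) := pow_le_pow_left₀ (abs_nonneg z) hzR.le _
        _ ≤ R ^ p := pow_le_pow_right₀ hR1 (Nat.sub_le p 1)
    rw [Summable.tsum_eq_zero_add hs]
    simp only [Nat.cast_zero, zero_mul, zero_div, zero_add]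
    rw [hyp0F1, ← tsum_mul_left]
    apply tsum_congr
    intro q
    have h1 : ((q:ℝ) + 1) ≠ 0 := by positivity
    have h2 : (q.factorial : ℝ) ≠ 0 := by exact_mod_cast q.factorial_pos.ne'
    have h3 : poch (c + 1) q ≠ 0 := (poch_pos (by linarith) q).ne'
    rw [show q + 1 - 1 = q from rfl, Nat.factorial_succ, poch_succ']
    push_cast
    field_simp
  rw [← hsum_eq]
  exact key

/-- first derivative of `V`. -/
noncomputable def V1fun (β s : ℝ) : ℝ :=
  Real.exp (-β * s / 8) *
    (-(β / 8) * hyp0F1 (2 / β) (s / 4) + β / 8 * hyp0F1 (2 / β + 1) (s / 4))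

/-- second derivative of `V`. -/
noncomputable def V2fun (β s : ℝ) : ℝ :=
  Real.exp (-β * s / 8) *
    (β ^ 2 / 64 * hyp0F1 (2 / β) (s / 4) - β ^ 2 / 32 * hyp0F1 (2 / β + 1) (s / 4)
      + β ^ 2 / (32 * (2 + β)) * hyp0F1 (2 / β + 2) (s / 4))

lemma exp_hasDerivAt (β s : ℝ) :
    HasDerivAt (fun s => Real.exp (-β * s / 8)) (-(β / 8) * Real.exp (-β * s / 8)) s := by
  have h : HasDerivAt (fun s : ℝ => -β * s / 8) (-β / 8) s := by
    simpa using ((hasDerivAt_id s).const_mul (-β)).div_const 8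
  have := (Real.hasDerivAt_exp (-β * s / 8)).comp s h
  exact this.congr_deriv (by ring)

lemma hypComp_hasDerivAt {c : ℝ} (hc : 0 < c) (s : ℝ) :
    HasDerivAt (fun s => hyp0F1 c (s / 4)) (1 / (4 * c) * hyp0F1 (c + 1) (s / 4)) s := by
  have h : HasDerivAt (fun s : ℝ => s / 4) (1 / 4) s := by
    simpa using (hasDerivAt_id s).div_const 4
  have := (hyp0F1_hasDerivAt hc (s / 4)).comp s h
  exact this.congr_deriv (by ring)

lemma Vfun_hasDerivAt {β : ℝ} (hβ : 0 < β) (s : ℝ) : HasDerivAt (Vfun β) (V1fun β s) s := by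
  have hβ' : β ≠ 0 := hβ.ne'
  have hc : 0 < 2 / β := by positivity
  have h := (exp_hasDerivAt β s).mul (hypComp_hasDerivAt hc s)
  have hfun : Vfun β = fun s => Real.exp (-β * s / 8) * hyp0F1 (2 / β) (s / 4) := rfl
  rw [hfun]
  refine h.congr_deriv ?_
  rw [V1fun]
  field_simp
  ring

lemma V1fun_hasDerivAt {β : ℝ} (hβ : 0 < β) (s : ℝ) : HasDerivAt (V1fun β) (V2fun β s) s := by
  have hβ' : β ≠ 0 := hβ.ne'
  have h2β : (2:ℝ) + β ≠ 0 := by positivity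
  have hc : 0 < 2 / β := by positivity
  have hc1 : 0 < 2 / β + 1 := by linarith
  have h := (exp_hasDerivAt β s).mul
    (((hypComp_hasDerivAt hc s).const_mul (-(β / 8))).add
      ((hypComp_hasDerivAt hc1 s).const_mul (β / 8)))
  have hfun : V1fun β = fun s => Real.exp (-β * s / 8) *
      (-(β / 8) * hyp0F1 (2 / β) (s / 4) + β / 8 * hyp0F1 (2 / β + 1) (s / 4)) := rfl
  rw [hfun]
  refine h.congr_deriv ?_
  rw [V2fun, show (2 / β + 1 + 1 : ℝ) = 2 / β + 2 from by ring]
  simp only [Pi.add_apply]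
  field_simp
  ring

lemma deriv2_Vfun {β : ℝ} (hβ : 0 < β) (s : ℝ) :
    deriv (deriv (Vfun β)) s = V2fun β s := by
  have h1 : deriv (Vfun β) = V1fun β := funext fun t => (Vfun_hasDerivAt hβ t).deriv
  rw [h1]
  exact (V1fun_hasDerivAt hβ s).deriv

lemma tsum_shift {g : ℕ → ℝ} (k : ℕ) (hg : Summable g) (h0 : ∀ p, p < k → g p = 0) :
    ∑' p, g p = ∑' q, g (q + k) := by
  rw [← Summable.sum_add_tsum_nat_add k hg,
    Finset.sum_eq_zero (fun i hi => h0 i (Finset.mem_range.mp hi)), zero_add]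

lemma contig {c : ℝ} (hc : 0 < c) (z : ℝ) :
    c * (c + 1) * (hyp0F1 c z - hyp0F1 (c + 1) z) = z * hyp0F1 (c + 2) z := by
  have hc1 : 0 < c + 1 := by linarith
  have hc2 : 0 < c + 2 := by linarith
  have hs0 : Summable (fun p : ℕ => z ^ p / (p.factorial * poch c p)) := summable_hyp hc z
  have hs1 : Summable (fun p : ℕ => z ^ p / (p.factorial * poch (c + 1) p)) :=
    summable_hyp hc1 z
  have hsg : Summable (fun p : ℕ => (p : ℝ) * z ^ p / (p.factorial * poch (c + 1) p)) := by
    apply summable_of_le_master hc1 1 z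
    intro p
    rw [pow_one, abs_div, abs_mul, abs_pow, abs_of_pos (fac_poch_pos hc1 p), Nat.abs_cast]
  have hdiff : hyp0F1 c z - hyp0F1 (c + 1) z
      = ∑' p : ℕ, (1 / c) * ((p : ℝ) * z ^ p / (p.factorial * poch (c + 1) p)) := by
    rw [hyp0F1, hyp0F1, ← Summable.tsum_sub hs0 hs1]
    apply tsum_congr
    intro p
    have key : poch c p * (c + p) = c * poch (c + 1) p := by rw [← poch_succ, poch_succ']
    have h1 : poch c p ≠ 0 := (poch_pos hc p).ne'
    have h2 : poch (c + 1) p ≠ 0 := (poch_pos hc1 p).ne'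
    have h3 : (p.factorial : ℝ) ≠ 0 := by exact_mod_cast p.factorial_pos.ne'
    have hcp : (0:ℝ) < c + p := by positivity
    have hB : poch (c + 1) p = poch c p * (c + p) / c := by
      rw [eq_div_iff hc.ne']
      linarith [key]
    rw [hB]
    field_simp
    ring
  have hshift : (∑' p : ℕ, (p : ℝ) * z ^ p / (p.factorial * poch (c + 1) p))
      = (z / (c + 1)) * hyp0F1 (c + 2) z := by
    rw [tsum_shift 1 hsg (by intro p hp; interval_cases p <;> simp)]
    rw [hyp0F1, ← tsum_mul_left]
    apply tsum_congr
    intro q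
    have h1 : ((q:ℝ) + 1) ≠ 0 := by positivity
    have h2 : (q.factorial : ℝ) ≠ 0 := by exact_mod_cast q.factorial_pos.ne'
    have h3 : poch (c + 2) q ≠ 0 := (poch_pos hc2 q).ne'
    rw [Nat.factorial_succ, poch_succ', show (c + 1 + 1 : ℝ) = c + 2 from by ring]
    push_cast
    field_simp
    ring
  rw [hdiff, tsum_mul_left, hshift]
  field_simp

lemma abs_ff3_le (p : ℕ) : |(p:ℝ) * ((p:ℝ) - 1) * ((p:ℝ) - 2)| ≤ (p:ℝ) ^ 3 := by
  rcases Nat.lt_or_ge p 3 with h | h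
  · interval_cases p <;> norm_num
  · have h3 : (3:ℝ) ≤ p := by exact_mod_cast h
    have hp : (0:ℝ) ≤ p := Nat.cast_nonneg p
    have a1 : (0:ℝ) ≤ (p:ℝ) - 1 := by linarith
    have a2 : (0:ℝ) ≤ (p:ℝ) - 2 := by linarith
    rw [abs_of_nonneg (mul_nonneg (mul_nonneg hp a1) a2),
      show (p:ℝ) ^ 3 = (p:ℝ) * (p:ℝ) * (p:ℝ) from by ring]
    gcongr <;> linarith

lemma abs_ff4_le (p : ℕ) : |(p:ℝ) * ((p:ℝ) - 1) * ((p:ℝ) - 2) * ((p:ℝ) - 3)| ≤ (p:ℝ) ^ 4 := by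
  rcases Nat.lt_or_ge p 3 with h | h
  · interval_cases p <;> norm_num
  · have h3 : (3:ℝ) ≤ p := by exact_mod_cast h
    have hp : (0:ℝ) ≤ p := Nat.cast_nonneg p
    have a1 : (0:ℝ) ≤ (p:ℝ) - 1 := by linarith
    have a2 : (0:ℝ) ≤ (p:ℝ) - 2 := by linarith
    have a3 : (0:ℝ) ≤ (p:ℝ) - 3 := by linarith
    rw [abs_of_nonneg (mul_nonneg (mul_nonneg (mul_nonneg hp a1) a2) a3),
      show (p:ℝ) ^ 4 = (p:ℝ) * (p:ℝ) * (p:ℝ) * (p:ℝ) from by ring]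
    gcongr <;> linarith

lemma summable_ff3 {c : ℝ} (hc : 0 < c) (z : ℝ) :
    Summable (fun p : ℕ =>
      (p:ℝ) * ((p:ℝ) - 1) * ((p:ℝ) - 2) * z ^ p / (p.factorial * poch c p)) := by
  apply summable_of_le_master hc 3 z
  intro p
  rw [abs_div, abs_mul, abs_pow, abs_of_pos (fac_poch_pos hc p)]
  exact div_le_div₀ (by positivity)
    (mul_le_mul_of_nonneg_right (abs_ff3_le p) (pow_nonneg (abs_nonneg z) p))
    (fac_poch_pos hc p) le_rfl

lemma summable_ff4 {c : ℝ} (hc : 0 < c) (z : ℝ) :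
    Summable (fun p : ℕ =>
      (p:ℝ) * ((p:ℝ) - 1) * ((p:ℝ) - 2) * ((p:ℝ) - 3) * z ^ p / (p.factorial * poch c p)) := by
  apply summable_of_le_master hc 4 z
  intro p
  rw [abs_div, abs_mul, abs_pow, abs_of_pos (fac_poch_pos hc p)]
  exact div_le_div₀ (by positivity)
    (mul_le_mul_of_nonneg_right (abs_ff4_le p) (pow_nonneg (abs_nonneg z) p))
    (fac_poch_pos hc p) le_rfl

lemma tsum_ff3 {c : ℝ} (hc : 0 < c) (z : ℝ) :
    (∑' p : ℕ, (p:ℝ) * ((p:ℝ) - 1) * ((p:ℝ) - 2) * z ^ p / (p.factorial * poch c p))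
      = z ^ 3 / poch c 3 * hyp0F1 (c + 3) z := by
  have hc3 : 0 < c + 3 := by linarith
  rw [tsum_shift 3 (summable_ff3 hc z) (by intro p hp; interval_cases p <;> norm_num)]
  rw [hyp0F1, ← tsum_mul_left]
  apply tsum_congr
  intro q
  have e1 : poch c (q + 3) = poch c 3 * poch (c + 3) q := poch_add c 3 q
  have e2 : (((q + 3).factorial : ℕ) : ℝ)
      = ((q:ℝ) + 3) * ((q:ℝ) + 2) * ((q:ℝ) + 1) * q.factorial := by
    rw [show q + 3 = (q + 2) + 1 from rfl, Nat.factorial_succ,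
      show q + 2 = (q + 1) + 1 from rfl, Nat.factorial_succ, Nat.factorial_succ]
    push_cast
    ring
  have h1 : ((q:ℝ) + 1) ≠ 0 := by positivity
  have h2 : ((q:ℝ) + 2) ≠ 0 := by positivity
  have h3 : ((q:ℝ) + 3) ≠ 0 := by positivity
  have h4 : (q.factorial : ℝ) ≠ 0 := by exact_mod_cast q.factorial_pos.ne'
  have h5 : poch c 3 ≠ 0 := (poch_pos hc 3).ne'
  have h6 : poch (c + 3) q ≠ 0 := (poch_pos hc3 q).ne'
  rw [e1, e2]
  push_cast
  field_simp
  ring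

lemma tsum_ff4 {c : ℝ} (hc : 0 < c) (z : ℝ) :
    (∑' p : ℕ, (p:ℝ) * ((p:ℝ) - 1) * ((p:ℝ) - 2) * ((p:ℝ) - 3) * z ^ p /
        (p.factorial * poch c p))
      = z ^ 4 / poch c 4 * hyp0F1 (c + 4) z := by
  have hc4 : 0 < c + 4 := by linarith
  rw [tsum_shift 4 (summable_ff4 hc z) (by intro p hp; interval_cases p <;> norm_num)]
  rw [hyp0F1, ← tsum_mul_left]
  apply tsum_congr
  intro q
  have e1 : poch c (q + 4) = poch c 4 * poch (c + 4) q := poch_add c 4 q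
  have e2 : (((q + 4).factorial : ℕ) : ℝ)
      = ((q:ℝ) + 4) * ((q:ℝ) + 3) * ((q:ℝ) + 2) * ((q:ℝ) + 1) * q.factorial := by
    rw [show q + 4 = (q + 3) + 1 from rfl, Nat.factorial_succ,
      show q + 3 = (q + 2) + 1 from rfl, Nat.factorial_succ,
      show q + 2 = (q + 1) + 1 from rfl, Nat.factorial_succ, Nat.factorial_succ]
    push_cast
    ring
  have h1 : ((q:ℝ) + 1) ≠ 0 := by positivity
  have h2 : ((q:ℝ) + 2) ≠ 0 := by positivity
  have h3 : ((q:ℝ) + 3) ≠ 0 := by positivity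
  have h3' : ((q:ℝ) + 4) ≠ 0 := by positivity
  have h4 : (q.factorial : ℝ) ≠ 0 := by exact_mod_cast q.factorial_pos.ne'
  have h5 : poch c 4 ≠ 0 := (poch_pos hc 4).ne'
  have h6 : poch (c + 4) q ≠ 0 := (poch_pos hc4 q).ne'
  rw [e1, e2]
  push_cast
  field_simp
  ring

lemma Wfun_eq {β : ℝ} (hβ : 0 < β) (s : ℝ) :
    Wfun β s = 1 / 24 * Real.exp (-β * s / 8) *
      (8 * ((s / 4) ^ 3 / poch (2 / β) 3) * hyp0F1 (2 / β + 3) (s / 4)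
        + 3 * ((s / 4) ^ 4 / poch (2 / β) 4) * hyp0F1 (2 / β + 4) (s / 4)) := by
  have hc : 0 < 2 / β := by positivity
  rw [Wfun]
  congr 1
  have hterm : ∀ p : ℕ,
      (p : ℝ) / ((Nat.factorial p) * poch (2 / β) p) *
        (-2 + 9 * (p : ℝ) - 10 * (p : ℝ) ^ 2 + 3 * (p : ℝ) ^ 3) * (s / 4) ^ p
      = 8 * ((p:ℝ) * ((p:ℝ) - 1) * ((p:ℝ) - 2) * (s / 4) ^ p /
            (p.factorial * poch (2 / β) p))
        + 3 * ((p:ℝ) * ((p:ℝ) - 1) * ((p:ℝ) - 2) * ((p:ℝ) - 3) * (s / 4) ^ p /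
            (p.factorial * poch (2 / β) p)) := by
    intro p
    ring
  rw [tsum_congr hterm,
    Summable.tsum_add ((summable_ff3 hc (s / 4)).mul_left 8) ((summable_ff4 hc (s / 4)).mul_left 3),
    tsum_mul_left, tsum_mul_left, tsum_ff3 hc (s / 4), tsum_ff4 hc (s / 4)]
  ring

set_option maxHeartbeats 2000000 in
lemma final_algebra (β z E F H1 H2 H3 H4 : ℝ) (hβ : 0 < β)
    (e2 : (2/β)*(2/β+1)*(F - H1) = z*H2)
    (e3 : (2/β+1)*(2/β+2)*(H1 - H2) = z*H3)
    (e4 : (2/β+2)*(2/β+3)*(H2 - H3) = z*H4) :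
    1/24*E*(8*(z^3/((2/β)*(2/β+1)*(2/β+2)))*H3
        + 3*(z^4/((2/β)*(2/β+1)*(2/β+2)*(2/β+3)))*H4)
      - (4*z)^2/(2*β^2) * (E*(β^2/64*F - β^2/32*H1 + β^2/(32*(2+β))*H2))
    = ((4*z)/48)*E*((-1+1/β)*F + ((1-1/β)+(4*z)*β/8)*H1) := by
  have hβ' : β ≠ 0 := hβ.ne'
  have h2β : (2:ℝ) + β ≠ 0 := by positivity
  have h22β : (2:ℝ) + 2*β ≠ 0 := by positivity
  have h23β : (2:ℝ) + 3*β ≠ 0 := by positivity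
  have E2 : 2*(2+β)*(F - H1) = β^2*(z*H2) := by
    field_simp at e2; linear_combination e2
  have E3 : (2+β)*(2+2*β)*(H1 - H2) = β^2*(z*H3) := by
    field_simp at e3; linear_combination e3
  have E4 : (2+2*β)*(2+3*β)*(H2 - H3) = β^2*(z*H4) := by
    field_simp at e4; linear_combination e4
  linear_combination (norm := (field_simp; ring))
    (E * (-((z*(3*(2/β)-2)/(24*(2/β)) + z^2/(8*(2/β)*(2/β+1)) - z*(2/β)/(8*(2/β+1)))) / β^2)) * E2
    + (E * (z^2*(3*(2/β)-2)/(24*(2/β)*(2/β+1)*(2/β+2)) / β^2)) * E3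
    + (E * (-(z^3/(8*(2/β)*(2/β+1)*(2/β+2)*(2/β+3))) / β^2)) * E4

theorem correction_term_identity (β : ℝ) (hβ : 0 < β) (s : ℝ) :
    Wfun β s - s ^ 2 / (2 * β ^ 2) * deriv (deriv (Vfun β)) s =
      (s / 48) * Real.exp (-β * s / 8) *
        ((-1 + 1 / β) * hyp0F1 (2 / β) (s / 4) +
          ((1 - 1 / β) + s * β / 8) * hyp0F1 (2 / β + 1) (s / 4)) := by
  have hβ' : β ≠ 0 := hβ.ne'
  have h2β : (2:ℝ) + β ≠ 0 := by positivity
  have hc : 0 < 2 / β := by positivity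
  have hc1 : 0 < 2 / β + 1 := by linarith
  have hc2 : 0 < 2 / β + 2 := by linarith
  have e2 := contig hc (s / 4)
  have e3 := contig hc1 (s / 4)
  have e4 := contig hc2 (s / 4)
  rw [show (2 / β + 1 + 1 : ℝ) = 2 / β + 2 from by ring,
    show (2 / β + 1 + 2 : ℝ) = 2 / β + 3 from by ring] at e3
  rw [show (2 / β + 2 + 1 : ℝ) = 2 / β + 3 from by ring,
    show (2 / β + 2 + 2 : ℝ) = 2 / β + 4 from by ring] at e4
  have hp3 : poch (2 / β) 3 = (2 / β) * (2 / β + 1) * (2 / β + 2) := by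
    simp [poch, Finset.prod_range_succ]
  have hp4 : poch (2 / β) 4 = (2 / β) * (2 / β + 1) * (2 / β + 2) * (2 / β + 3) := by
    simp [poch, Finset.prod_range_succ]
  rw [Wfun_eq hβ s, deriv2_Vfun hβ s, V2fun, hp3, hp4]
  have key := final_algebra β (s / 4) (Real.exp (-β * s / 8))
    (hyp0F1 (2 / β) (s / 4)) (hyp0F1 (2 / β + 1) (s / 4)) (hyp0F1 (2 / β + 2) (s / 4))
    (hyp0F1 (2 / β + 3) (s / 4)) (hyp0F1 (2 / β + 4) (s / 4)) hβ e2 e3 e4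
  rw [show (4 * (s / 4) : ℝ) = s from by ring] at key
  linear_combination key
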